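/- Let E be the probability simplex in ℝ^d and v : {1,…,d}² × E → [0,∞) continuous, where each map μ ↦ v(a,b,μ) is either identically zero, or satisfies: v(a,b,μ) > 0 whenever μ(a) > 0, and for each ν with ν(a) = 0 there is a neighbourhood U_ν and a decomposition v(a,b,μ) = v_†(a,b,μ(a)) v_‡(a,b,μ) on U_ν with v_† increasing in its third argument and v_‡(a,b,·) continuous and nonzero at ν. Define H(μ,p) = ∑_{a,b} v(a,b,μ)(e^{p_b − p_a} − 1). Then for every λ > 0 and h ∈ C(E), the comparison principle holds for f(μ) − λH(μ, ∇f(μ)) − h(μ) = 0: every bounded usc viscosity subsolution u and bounded lsc viscosity supersolution w satisfy u ≤ w. -/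

import Mathlib

/-!
If `u - w` were positive somewhere on the simplex, maximise `u μ - w ν - n Ψ(μ, ν)` over pairs,
with the one-sided penalty `Ψ(μ, ν) = ∑ₐ ((μ a - ν a)⁻)²`. Testing `u` at `μₙ` and `w` at `νₙ`
with the penalty gives `0 < δ ≤ λ (H(μₙ, pₙ) - H(νₙ, pₙ)) + h μₙ - h νₙ` for one momentum
`pₙ = n ∇Ψ`, and along a subsequence both maximisers tend to one point `μ`.

Because `Ψ` only sees negative parts, `pₙ ≤ 0` and `pₙ a < 0` forces `μₙ a < νₙ a`; so whenever
`e^{p_b - p_a} > 1` the rate `v(a, b, ·)` is compared at points with `μₙ a < νₙ a`. The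
supersolution inequality bounds every `v(a, b, νₙ) (e^{p_b - p_a} - 1)`. Away from the boundary
this bound caps the exponential factor, and at a boundary point monotonicity of `v_†` and
continuity of `v_‡` at a point where it does not vanish control the difference of the rates.
Either way every term of `H(μₙ, pₙ) - H(νₙ, pₙ)` is asymptotically nonpositive, a contradiction.
-/

open Real Filter Topology

theorem hasDerivAt_sq_min_zero (x : ℝ) :
    HasDerivAt (fun y : ℝ => min y 0 ^ 2) (2 * min x 0) x := by
  rcases lt_trichotomy x 0 with hx | rfl | hx
  · have hsq : HasDerivAt (fun y : ℝ => y ^ 2) (2 * min x 0) x := by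
      simpa [min_eq_left hx.le] using hasDerivAt_pow 2 x
    refine hsq.congr_of_eventuallyEq ?_
    filter_upwards [Iio_mem_nhds hx] with y hy
    rw [min_eq_left (le_of_lt hy)]
  · rw [hasDerivAt_iff_isLittleO_nhds_zero]
    have hbig : (fun y : ℝ => min y 0 ^ 2) =O[𝓝 0] fun y => y ^ 2 := by
      refine .of_bound' (.of_forall fun y => ?_)
      rw [norm_pow, norm_pow, Real.norm_eq_abs]
      exact pow_le_pow_left₀ (abs_nonneg _) (by rcases le_total y 0 with h | h <;> simp [h]) 2
    simpa using hbig.trans_isLittleO (Asymptotics.isLittleO_pow_id one_lt_two)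
  · refine (hasDerivAt_const x (0 : ℝ)).congr_of_eventuallyEq ?_ |>.congr_deriv (by simp [hx.le])
    filter_upwards [Ioi_mem_nhds hx] with y hy
    simp [min_eq_right (le_of_lt (Set.mem_Ioi.mp hy))]

theorem contDiff_sq_min_zero : ContDiff ℝ 1 (fun y : ℝ => min y 0 ^ 2) := by
  rw [contDiff_one_iff_deriv]
  refine ⟨fun x => (hasDerivAt_sq_min_zero x).differentiableAt, ?_⟩
  rw [funext fun x => (hasDerivAt_sq_min_zero x).deriv]
  fun_prop

section Separable

variable {ι : Type*} [Fintype ι] {g : ι → ℝ → ℝ}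

theorem hasFDerivAt_sum_comp_apply {g' : ι → ℝ} {x : ι → ℝ}
    (hg : ∀ i, HasDerivAt (g i) (g' i) (x i)) :
    HasFDerivAt (fun y : ι → ℝ => ∑ i, g i (y i))
      (∑ i, g' i • (ContinuousLinearMap.proj i : (ι → ℝ) →L[ℝ] ℝ)) x :=
  HasFDerivAt.fun_sum fun i _ => (hg i).comp_hasFDerivAt x (hasFDerivAt_apply i x)

theorem fderiv_sum_comp_apply_single [DecidableEq ι] {g' : ι → ℝ} {x : ι → ℝ}
    (hg : ∀ i, HasDerivAt (g i) (g' i) (x i)) (j : ι) :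
    fderiv ℝ (fun y : ι → ℝ => ∑ i, g i (y i)) x (Pi.single j 1) = g' j := by
  simp [(hasFDerivAt_sum_comp_apply hg).fderiv, Pi.single_apply]

theorem contDiff_sum_comp_apply {n : WithTop ℕ∞} (hg : ∀ i, ContDiff ℝ n (g i)) :
    ContDiff ℝ n (fun y : ι → ℝ => ∑ i, g i (y i)) :=
  ContDiff.sum fun i _ => (hg i).comp (contDiff_apply ℝ ℝ i)

end Separable

section Penalty

variable {ι : Type*} [Fintype ι]

noncomputable def penalty (μ ν : ι → ℝ) : ℝ := ∑ a, min (μ a - ν a) 0 ^ 2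

theorem penalty_nonneg (μ ν : ι → ℝ) : 0 ≤ penalty μ ν :=
  Finset.sum_nonneg fun _ _ => sq_nonneg _

@[simp]
theorem penalty_self (μ : ι → ℝ) : penalty μ μ = 0 := by simp [penalty]

theorem continuous_penalty :
    Continuous fun z : (ι → ℝ) × (ι → ℝ) => penalty z.1 z.2 := by
  unfold penalty; fun_prop

theorem le_of_penalty_eq_zero {μ ν : ι → ℝ} (h : penalty μ ν = 0) (a : ι) : ν a ≤ μ a := by
  have := (Finset.sum_eq_zero_iff_of_nonneg fun a _ => sq_nonneg _).mp h a (Finset.mem_univ a)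
  have := min_eq_right_iff.mp (pow_eq_zero_iff two_ne_zero |>.mp this)
  linarith

theorem eq_of_penalty_eq_zero {μ ν : ι → ℝ} (hμ : μ ∈ stdSimplex ℝ ι) (hν : ν ∈ stdSimplex ℝ ι)
    (h : penalty μ ν = 0) : μ = ν := by
  have hle := le_of_penalty_eq_zero h
  funext a
  exact ((Finset.sum_eq_sum_iff_of_le fun a _ => hle a).mp (hν.2.trans hμ.2.symm) a
    (Finset.mem_univ a)).symm

theorem hasDerivAt_const_mul_sq_min_sub (c r x : ℝ) :
    HasDerivAt (fun y => c * min (y - r) 0 ^ 2) (2 * c * min (x - r) 0) x := by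
  simpa [mul_left_comm, mul_assoc] using
    ((hasDerivAt_sq_min_zero (x - r)).comp x ((hasDerivAt_id x).sub_const r)).const_mul c

theorem hasDerivAt_neg_const_mul_sq_min_sub (c r x : ℝ) :
    HasDerivAt (fun y => -(c * min (r - y) 0 ^ 2)) (2 * c * min (r - x) 0) x := by
  simpa [mul_left_comm, mul_assoc] using
    (((hasDerivAt_sq_min_zero (r - x)).comp x ((hasDerivAt_id x).const_sub r)).const_mul c).fun_neg

theorem const_mul_penalty_left_eq (c : ℝ) (ν : ι → ℝ) :
    (fun μ => c * penalty μ ν) = fun μ => ∑ a, c * min (μ a - ν a) 0 ^ 2 := by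
  simp [penalty, Finset.mul_sum]

theorem neg_const_mul_penalty_right_eq (c : ℝ) (μ : ι → ℝ) :
    (fun ν => -(c * penalty μ ν)) = fun ν => ∑ a, -(c * min (μ a - ν a) 0 ^ 2) := by
  simp [penalty, Finset.mul_sum]

theorem contDiff_const_mul_penalty_left (c : ℝ) (ν : ι → ℝ) :
    ContDiff ℝ 1 fun μ => c * penalty μ ν := by
  rw [const_mul_penalty_left_eq]
  exact contDiff_sum_comp_apply fun a =>
    contDiff_const.mul (contDiff_sq_min_zero.comp (contDiff_id.sub contDiff_const))

theorem contDiff_neg_const_mul_penalty_right (c : ℝ) (μ : ι → ℝ) :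
    ContDiff ℝ 1 fun ν => -(c * penalty μ ν) := by
  rw [neg_const_mul_penalty_right_eq]
  exact contDiff_sum_comp_apply fun a =>
    (contDiff_const.mul (contDiff_sq_min_zero.comp (contDiff_const.sub contDiff_id))).neg

end Penalty

section PenaltyGrad

variable {ι : Type*}

def penaltyGrad (c : ℝ) (μ ν : ι → ℝ) (a : ι) : ℝ := 2 * c * min (μ a - ν a) 0

theorem penaltyGrad_nonpos {c : ℝ} (hc : 0 ≤ c) (μ ν : ι → ℝ) (a : ι) :
    penaltyGrad c μ ν a ≤ 0 :=
  mul_nonpos_of_nonneg_of_nonpos (by positivity) (min_le_right _ _)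

theorem lt_of_penaltyGrad_lt {c : ℝ} (hc : 0 ≤ c) {μ ν : ι → ℝ} {a b : ι}
    (h : penaltyGrad c μ ν a < penaltyGrad c μ ν b) : μ a < ν a := by
  have hmin : min (μ a - ν a) 0 < 0 :=
    neg_of_mul_neg_right (h.trans_le (penaltyGrad_nonpos hc μ ν b)) (by positivity)
  exact sub_neg.mp ((min_lt_iff.mp hmin).resolve_right (lt_irrefl 0))

variable [Fintype ι] [DecidableEq ι]

theorem fderiv_const_mul_penalty_left (c : ℝ) (μ ν : ι → ℝ) (i : ι) :
    fderiv ℝ (fun μ' => c * penalty μ' ν) μ (Pi.single i 1) = penaltyGrad c μ ν i := by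
  rw [const_mul_penalty_left_eq]
  exact fderiv_sum_comp_apply_single (fun a => hasDerivAt_const_mul_sq_min_sub c (ν a) (μ a)) i

theorem fderiv_neg_const_mul_penalty_right (c : ℝ) (μ ν : ι → ℝ) (i : ι) :
    fderiv ℝ (fun ν' => -(c * penalty μ ν')) ν (Pi.single i 1) = penaltyGrad c μ ν i := by
  rw [neg_const_mul_penalty_right_eq]
  exact fderiv_sum_comp_apply_single (fun a => hasDerivAt_neg_const_mul_sq_min_sub c (μ a) (ν a)) i

end PenaltyGrad

section Doubling

variable {ι : Type*} [Fintype ι] {E : Set (ι → ℝ)} {u w : (ι → ℝ) → ℝ} {c : ℝ}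

noncomputable def doubled (u w : (ι → ℝ) → ℝ) (c : ℝ) (z : (ι → ℝ) × (ι → ℝ)) : ℝ :=
  u z.1 - w z.2 - c * penalty z.1 z.2

theorem exists_isMaxOn_doubled (hE : IsCompact E) (hne : E.Nonempty)
    (hu : UpperSemicontinuousOn u E) (hw : LowerSemicontinuousOn w E) (c : ℝ) :
    ∃ z ∈ E ×ˢ E, IsMaxOn (doubled u w c) (E ×ˢ E) z := by
  have hu' : UpperSemicontinuousOn (fun z : (ι → ℝ) × (ι → ℝ) => u z.1) (E ×ˢ E) :=
    hu.comp continuous_fst.continuousOn fun z hz => hz.1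
  have hw' : UpperSemicontinuousOn (fun z : (ι → ℝ) × (ι → ℝ) => -w z.2) (E ×ˢ E) :=
    continuous_neg.comp_lowerSemicontinuousOn_antitone
      (hw.comp continuous_snd.continuousOn fun z hz => hz.2) fun _ _ => neg_le_neg
  have hP : UpperSemicontinuousOn (fun z : (ι → ℝ) × (ι → ℝ) => -(c * penalty z.1 z.2)) (E ×ˢ E) :=
    (continuous_const.mul continuous_penalty).neg.continuousOn.upperSemicontinuousOn
  have hdoubled : doubled u w c = fun z => u z.1 + -w z.2 + -(c * penalty z.1 z.2) := by
    funext z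
    simp only [doubled, sub_eq_add_neg]
  rw [hdoubled]
  exact ((hu'.add hw').add hP).exists_isMaxOn (hne.prod hne) (hE.prod hE)

theorem le_doubled_of_isMaxOn {z : (ι → ℝ) × (ι → ℝ)} (hmax : IsMaxOn (doubled u w c) (E ×ˢ E) z)
    {x : ι → ℝ} (hx : x ∈ E) : u x - w x ≤ doubled u w c z := by
  simpa [doubled] using isMaxOn_iff.mp hmax (x, x) ⟨hx, hx⟩

theorem sub_le_of_isMaxOn_doubled {z : (ι → ℝ) × (ι → ℝ)} (hc : 0 ≤ c)
    (hmax : IsMaxOn (doubled u w c) (E ×ˢ E) z) {x : ι → ℝ} (hx : x ∈ E) :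
    u x - w x ≤ u z.1 - w z.2 := by
  have := le_doubled_of_isMaxOn hmax hx
  have := mul_nonneg hc (penalty_nonneg z.1 z.2)
  simp only [doubled] at *
  linarith

theorem tendsto_penalty_of_isMaxOn_doubled (hE : IsCompact E) {x : ι → ℝ}
    (hx : x ∈ E) (hu : UpperSemicontinuousOn u E) (hw : LowerSemicontinuousOn w E)
    {z : ℕ → (ι → ℝ) × (ι → ℝ)}
    (hz : ∀ n, z n ∈ E ×ˢ E) (hmax : ∀ n : ℕ, IsMaxOn (doubled u w (n + 1)) (E ×ˢ E) (z n)) :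
    Tendsto (fun n => penalty (z n).1 (z n).2) atTop (𝓝 0) := by
  obtain ⟨Mu, hMu⟩ := hu.bddAbove_of_isCompact hE
  obtain ⟨mw, hmw⟩ := hw.bddBelow_of_isCompact hE
  set K := Mu - mw - (u x - w x)
  have hbound : ∀ n : ℕ, penalty (z n).1 (z n).2 ≤ K * (1 / ((n : ℝ) + 1)) := fun n => by
    have h₁ := le_doubled_of_isMaxOn (hmax n) hx
    have h₂ := hMu ⟨_, (hz n).1, rfl⟩
    have h₃ := hmw ⟨_, (hz n).2, rfl⟩
    rw [mul_one_div, le_div_iff₀ (by positivity)]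
    simp only [doubled] at h₁
    linarith
  exact squeeze_zero (fun n => penalty_nonneg _ _) hbound
    (by simpa using tendsto_one_div_add_atTop_nhds_zero_nat.const_mul K)

theorem exists_subseq_tendsto_of_tendsto_penalty {z : ℕ → (ι → ℝ) × (ι → ℝ)}
    (hz : ∀ n, z n ∈ stdSimplex ℝ ι ×ˢ stdSimplex ℝ ι)
    (hpen : Tendsto (fun n => penalty (z n).1 (z n).2) atTop (𝓝 0)) :
    ∃ μ ∈ stdSimplex ℝ ι, ∃ φ : ℕ → ℕ, StrictMono φ ∧
      Tendsto (fun k => (z (φ k)).1) atTop (𝓝[stdSimplex ℝ ι] μ) ∧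
      Tendsto (fun k => (z (φ k)).2) atTop (𝓝[stdSimplex ℝ ι] μ) := by
  have hS := isCompact_stdSimplex ℝ ι
  obtain ⟨⟨μ, ν⟩, ⟨hμ, hν⟩, φ, hφ, hlim⟩ := (hS.prod hS).tendsto_subseq hz
  have hμν : μ = ν := eq_of_penalty_eq_zero hμ hν <|
    tendsto_nhds_unique ((continuous_penalty.tendsto _).comp hlim) (hpen.comp hφ.tendsto_atTop)
  subst hμν
  refine ⟨μ, hμ, φ, hφ, ?_, ?_⟩
  · exact tendsto_nhdsWithin_iff.2
      ⟨(continuous_fst.tendsto _).comp hlim, .of_forall fun k => (hz (φ k)).1⟩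
  · exact tendsto_nhdsWithin_iff.2
      ⟨(continuous_snd.tendsto _).comp hlim, .of_forall fun k => (hz (φ k)).2⟩

end Doubling

section Viscosity

variable {ι : Type*} [Fintype ι] [DecidableEq ι]

def IsViscositySubsolution (E : Set (ι → ℝ)) (F : (ι → ℝ) → ℝ → (ι → ℝ) → ℝ)
    (u : (ι → ℝ) → ℝ) : Prop :=
  ∀ f : (ι → ℝ) → ℝ, ContDiff ℝ 1 f → ∀ μ ∈ E, IsMaxOn (fun ν => u ν - f ν) E μ →
    F μ (u μ) (fun i => fderiv ℝ f μ (Pi.single i 1)) ≤ 0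

def IsViscositySupersolution (E : Set (ι → ℝ)) (F : (ι → ℝ) → ℝ → (ι → ℝ) → ℝ)
    (w : (ι → ℝ) → ℝ) : Prop :=
  ∀ f : (ι → ℝ) → ℝ, ContDiff ℝ 1 f → ∀ μ ∈ E, IsMinOn (fun ν => w ν - f ν) E μ →
    0 ≤ F μ (w μ) (fun i => fderiv ℝ f μ (Pi.single i 1))

variable {E : Set (ι → ℝ)} {F : (ι → ℝ) → ℝ → (ι → ℝ) → ℝ} {u w : (ι → ℝ) → ℝ} {c : ℝ}

theorem IsViscositySubsolution.nonpos_of_isMaxOn_doubled (hu : IsViscositySubsolution E F u)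
    {z : (ι → ℝ) × (ι → ℝ)} (hz : z ∈ E ×ˢ E) (hmax : IsMaxOn (doubled u w c) (E ×ˢ E) z) :
    F z.1 (u z.1) (penaltyGrad c z.1 z.2) ≤ 0 := by
  have hmax' : IsMaxOn (fun μ => u μ - c * penalty μ z.2) E z.1 := isMaxOn_iff.mpr fun μ hμ => by
    have := isMaxOn_iff.mp hmax (μ, z.2) ⟨hμ, hz.2⟩
    simp only [doubled] at this
    linarith
  have := hu _ (contDiff_const_mul_penalty_left c z.2) z.1 hz.1 hmax'
  rwa [funext (fderiv_const_mul_penalty_left c z.1 z.2)] at this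

theorem IsViscositySupersolution.nonneg_of_isMaxOn_doubled (hw : IsViscositySupersolution E F w)
    {z : (ι → ℝ) × (ι → ℝ)} (hz : z ∈ E ×ˢ E) (hmax : IsMaxOn (doubled u w c) (E ×ˢ E) z) :
    0 ≤ F z.2 (w z.2) (penaltyGrad c z.1 z.2) := by
  have hmin : IsMinOn (fun ν => w ν - -(c * penalty z.1 ν)) E z.2 := isMinOn_iff.mpr fun ν hν => by
    have := isMaxOn_iff.mp hmax (z.1, ν) ⟨hz.1, hν⟩
    simp only [doubled] at this
    linarith
  have := hw _ (contDiff_neg_const_mul_penalty_right c z.1) z.2 hz.2 hmin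
  rwa [funext (fderiv_neg_const_mul_penalty_right c z.1 z.2)] at this

end Viscosity

section Hamiltonian

variable {ι : Type*} [Fintype ι]

noncomputable def jumpHamiltonian (v : ι → ι → (ι → ℝ) → ℝ) (μ p : ι → ℝ) : ℝ :=
  ∑ a, ∑ b, v a b μ * (exp (p b - p a) - 1)

theorem jumpHamiltonian_sub (v : ι → ι → (ι → ℝ) → ℝ) (μ ν p : ι → ℝ) :
    jumpHamiltonian v μ p - jumpHamiltonian v ν p =
      ∑ a, ∑ b, (v a b μ - v a b ν) * (exp (p b - p a) - 1) := by
  simp only [jumpHamiltonian, ← Finset.sum_sub_distrib, sub_mul]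

theorem mul_exp_sub_one_le_jumpHamiltonian_add {v : ι → ι → (ι → ℝ) → ℝ} {μ : ι → ℝ}
    (hv : ∀ a b, 0 ≤ v a b μ) (p : ι → ℝ) (a b : ι) :
    v a b μ * (exp (p b - p a) - 1) ≤ jumpHamiltonian v μ p + ∑ a', ∑ b', v a' b' μ := by
  have hterm : ∀ a' b', 0 ≤ v a' b' μ * exp (p b' - p a') := fun a' b' =>
    mul_nonneg (hv a' b') (exp_pos _).le
  have hsingle : v a b μ * exp (p b - p a) ≤ ∑ a', ∑ b', v a' b' μ * exp (p b' - p a') :=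
    (Finset.single_le_sum (f := fun b' => v a b' μ * exp (p b' - p a))
        (fun b' _ => hterm a b') (Finset.mem_univ b)).trans
      (Finset.single_le_sum (fun a' _ => Finset.sum_nonneg fun b' _ => hterm a' b')
        (Finset.mem_univ a))
  have hsum : jumpHamiltonian v μ p + ∑ a', ∑ b', v a' b' μ =
      ∑ a', ∑ b', v a' b' μ * exp (p b' - p a') := by
    simp only [jumpHamiltonian, ← Finset.sum_add_distrib, mul_sub, mul_one, sub_add_cancel]
  linarith [hv a b]

end Hamiltonian

section RateEstimate

variable {ι κ : Type*} {l : Filter κ}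

-- `f` and `g` are the paper's `v_†(a, b, ·)` and `v_‡(a, b, ·)` for the rate `r = v(a, b, ·)`.
def HasBoundaryFactorization (S : Set (ι → ℝ)) (r : (ι → ℝ) → ℝ) (a : ι) : Prop :=
  ∀ ν ∈ S, ν a = 0 → ∃ U ∈ 𝓝[S] ν, ∃ f : ℝ → ℝ, ∃ g : (ι → ℝ) → ℝ,
    (∀ μ ∈ U, r μ = f (μ a) * g μ) ∧ MonotoneOn f ((fun μ : ι → ℝ => μ a) '' U) ∧
      ContinuousOn g U ∧ g ν ≠ 0

def IsAdmissibleRate (S : Set (ι → ℝ)) (r : (ι → ℝ) → ℝ) (a : ι) : Prop :=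
  (∀ ν ∈ S, r ν = 0) ∨ ((∀ ν ∈ S, 0 < ν a → 0 < r ν) ∧ HasBoundaryFactorization S r a)

theorem factored_sub_mul_le {f₁ f₂ g₁ g₂ X C η δ : ℝ} (hf : f₁ ≤ f₂) (hf₂ : 0 ≤ f₂)
    (hg₁ : 0 ≤ g₁) (hη : 0 < η) (hg₂ : η ≤ g₂) (hδ₀ : 0 ≤ δ) (hδ : g₁ - g₂ ≤ δ) (hX : 0 ≤ X)
    (hC : f₂ * g₂ * X ≤ C) :
    (f₁ * g₁ - f₂ * g₂) * X ≤ C / η * δ := by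
  have hfX : f₂ * X ≤ C / η := by
    rw [le_div_iff₀ hη]
    nlinarith [mul_nonneg hf₂ hX]
  calc (f₁ * g₁ - f₂ * g₂) * X ≤ f₂ * X * (g₁ - g₂) := by nlinarith [mul_nonneg hg₁ hX]
    _ ≤ f₂ * X * δ := mul_le_mul_of_nonneg_left hδ (mul_nonneg hf₂ hX)
    _ ≤ C / η * δ := mul_le_mul_of_nonneg_right hfX hδ₀

theorem eventually_mul_le_of_eventually_pos_imp {D X : κ → ℝ} {ε : ℝ} (hD : Tendsto D l (𝓝 0))
    (hX : ∀ k, -1 < X k) (hε : 0 < ε) (hpos : ∀ᶠ k in l, 0 < X k → D k * X k ≤ ε) :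
    ∀ᶠ k in l, D k * X k ≤ ε := by
  filter_upwards [hpos, hD.eventually_const_lt (neg_neg_of_pos hε)] with k hk hDk
  rcases lt_or_ge 0 (X k) with hXk | hXk
  · exact hk hXk
  · nlinarith [mul_nonneg (by linarith : 0 ≤ D k + ε) (neg_nonneg.mpr hXk), hX k]

variable {r : (ι → ℝ) → ℝ} {S : Set (ι → ℝ)} {μs νs : κ → ι → ℝ} {X : κ → ℝ} {μ : ι → ℝ}
  {C ε : ℝ}

theorem eventually_pos_imp_sub_mul_le_of_pos (hr : ContinuousWithinAt r S μ)
    (hμs : Tendsto μs l (𝓝[S] μ)) (hνs : Tendsto νs l (𝓝[S] μ)) (hrμ : 0 < r μ) (hC : 0 < C)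
    (hbound : ∀ k, r (νs k) * X k ≤ C) (hε : 0 < ε) :
    ∀ᶠ k in l, 0 < X k → (r (μs k) - r (νs k)) * X k ≤ ε := by
  set B := 2 * C / r μ
  have hB : 0 < B := by positivity
  have hD : Tendsto (fun k => r (μs k) - r (νs k)) l (𝓝 0) := by
    simpa using (hr.tendsto.comp hμs).sub (hr.tendsto.comp hνs)
  filter_upwards [(hr.tendsto.comp hνs).eventually_const_lt (half_lt_self hrμ),
    hD.eventually_lt_const (div_pos hε hB)] with k hνk hDk hXk
  change r μ / 2 < r (νs k) at hνk
  have hXB : X k ≤ B := by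
    rw [le_div_iff₀ hrμ]
    nlinarith [hbound k, mul_lt_mul_of_pos_right hνk hXk]
  calc (r (μs k) - r (νs k)) * X k ≤ ε / B * X k :=
        mul_le_mul_of_nonneg_right hDk.le hXk.le
    _ ≤ ε / B * B := mul_le_mul_of_nonneg_left hXB (by positivity)
    _ = ε := div_mul_cancel₀ ε hB.ne'

theorem eventually_pos_imp_sub_mul_le_of_boundary [Fintype ι] {a : ι}
    (hfac : HasBoundaryFactorization (stdSimplex ℝ ι) r a)
    (hpos : ∀ ν ∈ stdSimplex ℝ ι, 0 < ν a → 0 < r ν) (hμ : μ ∈ stdSimplex ℝ ι) (hμa : μ a = 0)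
    (hrμ : r μ = 0) (hμs : Tendsto μs l (𝓝[stdSimplex ℝ ι] μ))
    (hνs : Tendsto νs l (𝓝[stdSimplex ℝ ι] μ)) (hXpos : ∀ k, 0 < X k → μs k a < νs k a)
    (hC : 0 < C) (hbound : ∀ k, r (νs k) * X k ≤ C) (hε : 0 < ε) :
    ∀ᶠ k in l, 0 < X k → (r (μs k) - r (νs k)) * X k ≤ ε := by
  obtain ⟨U, hU, f, g, hrfg, hf, hg, hgμ⟩ := hfac μ hμ hμa
  have hμU : μ ∈ U := mem_of_mem_nhdsWithin hμ hU
  have hfμ : f (μ a) = 0 :=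
    (mul_eq_zero.mp ((hrfg μ hμU).symm.trans hrμ)).resolve_right hgμ
  have hf_nonneg : ∀ ν ∈ U, ν ∈ stdSimplex ℝ ι → 0 ≤ f (ν a) := fun ν hνU hνS =>
    hfμ ▸ hf ⟨μ, hμU, rfl⟩ ⟨ν, hνU, rfl⟩ (show μ a ≤ ν a from hμa ▸ hνS.1 a)
  have hgS : Tendsto g (𝓝[stdSimplex ℝ ι] μ) (𝓝 (g μ)) :=
    (hg μ hμU).tendsto.mono_left (nhdsWithin_le_of_mem hU)
  have hgμs : Tendsto (fun k => g (μs k)) l (𝓝 (g μ)) := hgS.comp hμs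
  have hgνs : Tendsto (fun k => g (νs k)) l (𝓝 (g μ)) := hgS.comp hνs
  have hμS : ∀ᶠ k in l, μs k ∈ stdSimplex ℝ ι := hμs self_mem_nhdsWithin
  have hνS : ∀ᶠ k in l, νs k ∈ stdSimplex ℝ ι := hνs self_mem_nhdsWithin
  rcases hgμ.lt_or_gt with hgneg | hgpos
  · -- here `f ≥ 0 > g` near `μ`, which is incompatible with the positive rate that `X k > 0` forces
    filter_upwards [hμS, hνS, hνs hU, hgνs.eventually_lt_const hgneg] with k hμk hνk hνU hgk hXk
    have hrν := hpos _ hνk ((hμk.1 a).trans_lt (hXpos k hXk))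
    rw [hrfg _ hνU] at hrν
    exact absurd hrν (mul_nonpos_of_nonneg_of_nonpos (hf_nonneg _ hνU hνk) hgk.le).not_gt
  · have hη : 0 < g μ / 2 := half_pos hgpos
    have hgdiff : Tendsto (fun k => g (μs k) - g (νs k)) l (𝓝 0) := by
      simpa using hgμs.sub hgνs
    filter_upwards [hνS, hμs hU, hνs hU, hgμs.eventually_const_lt hgpos,
      hgνs.eventually_const_lt (half_lt_self hgpos),
      hgdiff.eventually_lt_const (show 0 < ε * (g μ / 2) / C by positivity)]
      with k hνk hμU hνU hgμk hgνk hgk hXk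
    rw [hrfg _ hμU, hrfg _ hνU]
    calc (f (μs k a) * g (μs k) - f (νs k a) * g (νs k)) * X k
        ≤ C / (g μ / 2) * (ε * (g μ / 2) / C) :=
          factored_sub_mul_le (hf ⟨_, hμU, rfl⟩ ⟨_, hνU, rfl⟩ (hXpos k hXk).le)
            (hf_nonneg _ hνU hνk) hgμk.le hη hgνk.le (by positivity) hgk.le hXk.le
            (hrfg _ hνU ▸ hbound k)
      _ = ε := by field_simp

end RateEstimate

section HamiltonianEstimate

variable {ι κ : Type*} [Fintype ι] {l : Filter κ} {μs νs : κ → ι → ℝ} {μ : ι → ℝ}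

theorem eventually_sub_mul_le {r : (ι → ℝ) → ℝ} {a : ι} {X : κ → ℝ} {C ε : ℝ}
    (hr : ContinuousOn r (stdSimplex ℝ ι)) (hr0 : ∀ ν ∈ stdSimplex ℝ ι, 0 ≤ r ν)
    (hcond : IsAdmissibleRate (stdSimplex ℝ ι) r a)
    (hμ : μ ∈ stdSimplex ℝ ι) (hμs : Tendsto μs l (𝓝[stdSimplex ℝ ι] μ))
    (hνs : Tendsto νs l (𝓝[stdSimplex ℝ ι] μ)) (hX : ∀ k, -1 < X k)
    (hXpos : ∀ k, 0 < X k → μs k a < νs k a) (hC : 0 < C) (hbound : ∀ k, r (νs k) * X k ≤ C)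
    (hε : 0 < ε) :
    ∀ᶠ k in l, (r (μs k) - r (νs k)) * X k ≤ ε := by
  have hD : Tendsto (fun k => r (μs k) - r (νs k)) l (𝓝 0) := by
    simpa using ((hr μ hμ).tendsto.comp hμs).sub ((hr μ hμ).tendsto.comp hνs)
  refine eventually_mul_le_of_eventually_pos_imp hD hX hε ?_
  rcases hcond with hzero | ⟨hpos, hfac⟩
  · filter_upwards [hμs self_mem_nhdsWithin, hνs self_mem_nhdsWithin] with k hμk hνk _
    simp [hzero _ hμk, hzero _ hνk, hε.le]
  rcases (hr0 μ hμ).lt_or_eq with hrμ | hrμ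
  · exact eventually_pos_imp_sub_mul_le_of_pos (hr μ hμ) hμs hνs hrμ hC hbound hε
  · have hμa : μ a = 0 := by
      by_contra hne
      exact (hpos μ hμ ((hμ.1 a).lt_of_ne' hne)).ne hrμ
    exact eventually_pos_imp_sub_mul_le_of_boundary hfac hpos hμ hμa hrμ.symm hμs hνs hXpos hC
      hbound hε

theorem eventually_sum_le {α : Type*} (s : Finset α) {f : α → κ → ℝ}
    (h : ∀ i ∈ s, ∀ ε > 0, ∀ᶠ k in l, f i k ≤ ε) {ε : ℝ} (hε : 0 < ε) :
    ∀ᶠ k in l, ∑ i ∈ s, f i k ≤ ε := by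
  classical
  induction s using Finset.induction_on generalizing ε with
  | empty => simp [hε.le]
  | insert i s hi ih =>
    filter_upwards [h i (Finset.mem_insert_self i s) _ (half_pos hε),
      ih (fun j hj => h j (Finset.mem_insert_of_mem hj)) (half_pos hε)] with k hi' hs'
    rw [Finset.sum_insert hi]
    linarith

theorem eventually_jumpHamiltonian_sub_le {v : ι → ι → (ι → ℝ) → ℝ}
    (hvc : ∀ a b, ContinuousOn (v a b) (stdSimplex ℝ ι))
    (hv0 : ∀ a b, ∀ ν ∈ stdSimplex ℝ ι, 0 ≤ v a b ν)
    (hvcond : ∀ a b, IsAdmissibleRate (stdSimplex ℝ ι) (v a b) a)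
    {p : κ → ι → ℝ} {K ε : ℝ} (hμ : μ ∈ stdSimplex ℝ ι)
    (hμs : Tendsto μs l (𝓝[stdSimplex ℝ ι] μ)) (hνs : Tendsto νs l (𝓝[stdSimplex ℝ ι] μ))
    (hνS : ∀ k, νs k ∈ stdSimplex ℝ ι) (hp : ∀ k a b, p k a < p k b → μs k a < νs k a)
    (hK : ∀ k, jumpHamiltonian v (νs k) (p k) ≤ K) (hε : 0 < ε) :
    ∀ᶠ k in l, jumpHamiltonian v (μs k) (p k) - jumpHamiltonian v (νs k) (p k) ≤ ε := by
  obtain ⟨R, hR⟩ := (isCompact_stdSimplex ℝ ι).bddAbove_image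
    (continuousOn_finsetSum _ fun a _ => continuousOn_finsetSum _ fun b _ => hvc a b)
  have hbound : ∀ a b k, v a b (νs k) * (exp (p k b - p k a) - 1) ≤ max (K + R) 1 := fun a b k =>
    (mul_exp_sub_one_le_jumpHamiltonian_add (fun a b => hv0 a b _ (hνS k)) _ a b).trans
      ((add_le_add (hK k) (hR ⟨_, hνS k, rfl⟩)).trans (le_max_left _ _))
  simp only [jumpHamiltonian_sub]
  refine eventually_sum_le _ (fun a _ ε hε => eventually_sum_le _ (fun b _ ε hε => ?_) hε) hε
  exact eventually_sub_mul_le (hvc a b) (hv0 a b) (hvcond a b) hμ hμs hνs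
    (fun k => by linarith [exp_pos (p k b - p k a)])
    (fun k hk => hp k a b (sub_pos.mp (one_lt_exp_iff.mp (sub_pos.mp hk))))
    (lt_max_of_lt_right one_pos) (hbound a b) hε

theorem nonpos_of_viscosity_inequalities_at_pairs [l.NeBot] {v : ι → ι → (ι → ℝ) → ℝ}
    (hvc : ∀ a b, ContinuousOn (v a b) (stdSimplex ℝ ι))
    (hv0 : ∀ a b, ∀ ν ∈ stdSimplex ℝ ι, 0 ≤ v a b ν)
    (hvcond : ∀ a b, IsAdmissibleRate (stdSimplex ℝ ι) (v a b) a)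
    {lam δ : ℝ} (hlam : 0 < lam) {h u w : (ι → ℝ) → ℝ} (hh : ContinuousOn h (stdSimplex ℝ ι))
    (hu : UpperSemicontinuousOn u (stdSimplex ℝ ι)) {p : κ → ι → ℝ} (hμ : μ ∈ stdSimplex ℝ ι)
    (hμs : Tendsto μs l (𝓝[stdSimplex ℝ ι] μ)) (hνs : Tendsto νs l (𝓝[stdSimplex ℝ ι] μ))
    (hμS : ∀ k, μs k ∈ stdSimplex ℝ ι) (hνS : ∀ k, νs k ∈ stdSimplex ℝ ι)
    (hp : ∀ k a b, p k a < p k b → μs k a < νs k a)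
    (hsub : ∀ k, u (μs k) - lam * jumpHamiltonian v (μs k) (p k) - h (μs k) ≤ 0)
    (hsuper : ∀ k, 0 ≤ w (νs k) - lam * jumpHamiltonian v (νs k) (p k) - h (νs k))
    (hgap : ∀ k, δ ≤ u (μs k) - w (νs k)) :
    δ ≤ 0 := by
  by_contra! hδ
  obtain ⟨Mu, hMu⟩ := hu.bddAbove_of_isCompact (isCompact_stdSimplex ℝ ι)
  obtain ⟨mh, hmh⟩ := (isCompact_stdSimplex ℝ ι).bddBelow_image hh
  have hK k : jumpHamiltonian v (νs k) (p k) ≤ (Mu - δ - mh) / lam := by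
    rw [le_div_iff₀' hlam]
    linarith [hsuper k, hgap k, hMu ⟨_, hμS k, rfl⟩, hmh ⟨_, hνS k, rfl⟩]
  have hHdiff := eventually_jumpHamiltonian_sub_le hvc hv0 hvcond hμ hμs hνs hνS hp hK
    (show 0 < δ / (2 * lam) by positivity)
  have hhdiff : ∀ᶠ k in l, h (μs k) - h (νs k) < δ / 2 := by
    have := ((hh μ hμ).tendsto.comp hμs).sub ((hh μ hμ).tendsto.comp hνs)
    rw [sub_self] at this
    exact this.eventually_lt_const (half_pos hδ)
  obtain ⟨k, hk₁, hk₂⟩ := (hHdiff.and hhdiff).exists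
  have hlamH : lam * (jumpHamiltonian v (μs k) (p k) - jumpHamiltonian v (νs k) (p k)) ≤ δ / 2 :=
    calc _ ≤ lam * (δ / (2 * lam)) := mul_le_mul_of_nonneg_left hk₁ hlam.le
      _ = δ / 2 := by field_simp
  linarith [hsub k, hsuper k, hgap k]

end HamiltonianEstimate

theorem stmt_17_general {d : ℕ}
    (v : Fin d → Fin d → (Fin d → ℝ) → ℝ)
    (hvc : ∀ a b, ContinuousOn (v a b) (stdSimplex ℝ (Fin d)))
    (hv0 : ∀ a b, ∀ μ ∈ stdSimplex ℝ (Fin d), 0 ≤ v a b μ)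
    (hvcond : ∀ a b : Fin d,
      (∀ μ ∈ stdSimplex ℝ (Fin d), v a b μ = 0) ∨
      ((∀ μ ∈ stdSimplex ℝ (Fin d), 0 < μ a → 0 < v a b μ) ∧
        ∀ ν ∈ stdSimplex ℝ (Fin d), ν a = 0 →
          ∃ U ∈ nhdsWithin ν (stdSimplex ℝ (Fin d)),
          ∃ vd : ℝ → ℝ, ∃ vdd : (Fin d → ℝ) → ℝ,
            (∀ μ ∈ U, v a b μ = vd (μ a) * vdd μ) ∧
            MonotoneOn vd ((fun μ : Fin d → ℝ => μ a) '' U) ∧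
            ContinuousOn vdd U ∧ vdd ν ≠ 0))
    (H : (Fin d → ℝ) → (Fin d → ℝ) → ℝ)
    (hH : ∀ μ p, H μ p = ∑ a, ∑ b, v a b μ * (exp (p b - p a) - 1))
    (lam : ℝ) (hlam : 0 < lam)
    (h : (Fin d → ℝ) → ℝ) (hh : ContinuousOn h (stdSimplex ℝ (Fin d)))
    (u w : (Fin d → ℝ) → ℝ)
    (hu_usc : UpperSemicontinuousOn u (stdSimplex ℝ (Fin d)))
    (hw_lsc : LowerSemicontinuousOn w (stdSimplex ℝ (Fin d)))
    -- u is a viscosity subsolution of f − λH(·,∇f) − h = 0: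
    (hu_sub : ∀ f : (Fin d → ℝ) → ℝ, ContDiff ℝ 1 f → ∀ μ ∈ stdSimplex ℝ (Fin d),
      IsMaxOn (fun ν => u ν - f ν) (stdSimplex ℝ (Fin d)) μ →
      u μ - lam * H μ (fun i => fderiv ℝ f μ (Pi.single i 1)) - h μ ≤ 0)
    -- w is a viscosity supersolution of f − λH(·,∇f) − h = 0:
    (hw_super : ∀ f : (Fin d → ℝ) → ℝ, ContDiff ℝ 1 f → ∀ μ ∈ stdSimplex ℝ (Fin d),
      IsMinOn (fun ν => w ν - f ν) (stdSimplex ℝ (Fin d)) μ →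
      0 ≤ w μ - lam * H μ (fun i => fderiv ℝ f μ (Pi.single i 1)) - h μ) :
    ∀ μ ∈ stdSimplex ℝ (Fin d), u μ ≤ w μ := by
  obtain rfl : H = jumpHamiltonian v := funext fun μ => funext (hH μ)
  have hu : IsViscositySubsolution (stdSimplex ℝ (Fin d))
      (fun μ r q => r - lam * jumpHamiltonian v μ q - h μ) u := hu_sub
  have hw : IsViscositySupersolution (stdSimplex ℝ (Fin d))
      (fun μ r q => r - lam * jumpHamiltonian v μ q - h μ) w := hw_super
  have hS := isCompact_stdSimplex ℝ (Fin d)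
  intro μ₀ hμ₀
  choose z hzS hzmax using fun n : ℕ =>
    exists_isMaxOn_doubled hS ⟨μ₀, hμ₀⟩ hu_usc hw_lsc ((n : ℝ) + 1)
  obtain ⟨μ, hμ, φ, -, hμs, hνs⟩ := exists_subseq_tendsto_of_tendsto_penalty hzS
    (tendsto_penalty_of_isMaxOn_doubled hS hμ₀ hu_usc hw_lsc hzS hzmax)
  have hle := nonpos_of_viscosity_inequalities_at_pairs hvc hv0 hvcond hlam hh hu_usc hμ hμs hνs
    (fun k => (hzS (φ k)).1) (fun k => (hzS (φ k)).2)
    (fun k a b => lt_of_penaltyGrad_lt (by positivity))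
    (fun k => hu.nonpos_of_isMaxOn_doubled (hzS (φ k)) (hzmax (φ k)))
    (fun k => hw.nonneg_of_isMaxOn_doubled (hzS (φ k)) (hzmax (φ k)))
    (fun k => sub_le_of_isMaxOn_doubled (by positivity) (hzmax (φ k)) hμ₀)
  linarith

/-- Comparison principle for the mean-field jump Hamilton–Jacobi equation
`f(μ) − λH(μ,∇f(μ)) − h(μ) = 0` on the probability simplex `E ⊆ ℝ^d`, where
`H(μ,p) = ∑_{a,b} v(a,b,μ)(e^{p_b − p_a} − 1)` and each rate `v(a,b,·)` is either
identically zero, or positive when `μ(a) > 0` with an increasing × continuous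
nonvanishing local decomposition at the boundary `ν(a) = 0`: every bounded usc
viscosity subsolution `u` and bounded lsc viscosity supersolution `w` satisfy
`u ≤ w` on `E`. -/
theorem stmt_17 {d : ℕ}
    (v : Fin d → Fin d → (Fin d → ℝ) → ℝ)
    (hvc : ∀ a b, ContinuousOn (v a b) (stdSimplex ℝ (Fin d)))
    (hv0 : ∀ a b, ∀ μ ∈ stdSimplex ℝ (Fin d), 0 ≤ v a b μ)
    (hvcond : ∀ a b : Fin d,
      (∀ μ ∈ stdSimplex ℝ (Fin d), v a b μ = 0) ∨
      ((∀ μ ∈ stdSimplex ℝ (Fin d), 0 < μ a → 0 < v a b μ) ∧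
        ∀ ν ∈ stdSimplex ℝ (Fin d), ν a = 0 →
          ∃ U ∈ nhdsWithin ν (stdSimplex ℝ (Fin d)),
          ∃ vd : ℝ → ℝ, ∃ vdd : (Fin d → ℝ) → ℝ,
            (∀ μ ∈ U, v a b μ = vd (μ a) * vdd μ) ∧
            MonotoneOn vd ((fun μ : Fin d → ℝ => μ a) '' U) ∧
            ContinuousOn vdd U ∧ vdd ν ≠ 0))
    (H : (Fin d → ℝ) → (Fin d → ℝ) → ℝ)
    (hH : ∀ μ p, H μ p = ∑ a, ∑ b, v a b μ * (exp (p b - p a) - 1))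
    (lam : ℝ) (hlam : 0 < lam)
    (h : (Fin d → ℝ) → ℝ) (hh : ContinuousOn h (stdSimplex ℝ (Fin d)))
    (u w : (Fin d → ℝ) → ℝ)
    (hu_usc : UpperSemicontinuousOn u (stdSimplex ℝ (Fin d)))
    (hw_lsc : LowerSemicontinuousOn w (stdSimplex ℝ (Fin d)))
    (hub : ∃ M, ∀ μ ∈ stdSimplex ℝ (Fin d), |u μ| ≤ M)
    (hwb : ∃ M, ∀ μ ∈ stdSimplex ℝ (Fin d), |w μ| ≤ M)
    -- u is a viscosity subsolution of f − λH(·,∇f) − h = 0: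
    (hu_sub : ∀ f : (Fin d → ℝ) → ℝ, ContDiff ℝ 1 f → ∀ μ ∈ stdSimplex ℝ (Fin d),
      IsMaxOn (fun ν => u ν - f ν) (stdSimplex ℝ (Fin d)) μ →
      u μ - lam * H μ (fun i => fderiv ℝ f μ (Pi.single i 1)) - h μ ≤ 0)
    -- w is a viscosity supersolution of f − λH(·,∇f) − h = 0:
    (hw_super : ∀ f : (Fin d → ℝ) → ℝ, ContDiff ℝ 1 f → ∀ μ ∈ stdSimplex ℝ (Fin d),
      IsMinOn (fun ν => w ν - f ν) (stdSimplex ℝ (Fin d)) μ →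
      0 ≤ w μ - lam * H μ (fun i => fderiv ℝ f μ (Pi.single i 1)) - h μ) :
    ∀ μ ∈ stdSimplex ℝ (Fin d), u μ ≤ w μ :=
  stmt_17_general v hvc hv0 hvcond H hH lam hlam h hh u w hu_usc hw_lsc hu_sub hw_super
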